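/- arXiv:1512.01619 — 2 statements merged into one kernel-verified Lean document; each statement's English description precedes it below -/
import Mathlib

section
/- Let β ∈ ℝ, v₁, v₂ ∈ ℝ², and B₁, B₂, C be 2×2 real matrices. Suppose that span{v₂, C v₂} = ℝ², that βI + C is invertible, and that B₁ e^{−βt} v₁ + B₂ e^{tC} v₂ = 0 for all t in a nontrivial interval of ℝ. Then B₂ = 0 and B₁ v₁ = 0. -/
/-!
With `P = βI + C` we have `e^{βt} e^{tC} = e^{tP}`, so multiplying the identity by `e^{βt}`
shows that `t ↦ B₂ e^{tP} v₂` is constant, equal to `-B₁ v₁`, on the interval. Differentiating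
twice, `B₂ e^{tP} P` kills `v₂` and `P v₂`, which span `ℝ²` because
`span {v₂, P v₂} = span {v₂, C v₂}`. As `P` and `e^{tP}` are invertible, `B₂ = 0`, and then the
constant value `-B₁ v₁` vanishes.
-/

open Matrix
open NormedSpace (exp)

theorem Submodule.span_pair_smul_add {R M : Type*} [Ring R] [AddCommGroup M] [Module R M]
    (r : R) (x y : M) : span R {x, r • x + y} = span R {x, y} := by
  apply le_antisymm <;> rw [span_le] <;> rintro z (rfl | rfl)
  · exact subset_span (.inl rfl)
  · exact add_mem (smul_mem _ r (subset_span (.inl rfl))) (subset_span (.inr rfl))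
  · exact subset_span (.inl rfl)
  · have hsum : r • x + z ∈ span R {x, r • x + z} := subset_span (.inr rfl)
    simpa using sub_mem hsum (smul_mem _ r (subset_span (.inl rfl)))

theorem Matrix.eq_zero_of_mulVec_eq_zero_of_span_eq_top {R m n : Type*} [CommRing R] [Fintype n]
    {M : Matrix m n R} {s : Set (n → R)} (hs : Submodule.span R s = ⊤)
    (h : ∀ x ∈ s, M *ᵥ x = 0) : M = 0 := by
  have : M.mulVecLin = 0 := LinearMap.ext_on hs h
  exact ext_iff_mulVec.2 fun v => by simpa using LinearMap.congr_fun this v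

variable {m n : Type*} [Fintype m] [Fintype n] [DecidableEq n]

theorem Matrix.hasDerivAt_mulVec_exp_smul_mulVec (B : Matrix m n ℝ) (C : Matrix n n ℝ)
    (u : n → ℝ) (t : ℝ) :
    HasDerivAt (fun s : ℝ => B *ᵥ (exp (s • C) *ᵥ u)) (B *ᵥ (exp (t • C) *ᵥ (C *ᵥ u))) t := by
  -- Matrices carry no global norm; the derivative does not depend on the one chosen here.
  let : SeminormedRing (Matrix n n ℝ) := Matrix.linftyOpSemiNormedRing
  let : NormedRing (Matrix n n ℝ) := Matrix.linftyOpNormedRing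
  let : NormedAlgebra ℝ (Matrix n n ℝ) := Matrix.linftyOpNormedAlgebra
  let L : Matrix n n ℝ →L[ℝ] (m → ℝ) :=
    LinearMap.toContinuousLinearMap (B.mulVecLin ∘ₗ (mulVecBilin ℝ ℝ).flip u)
  have := (L.hasFDerivAt (x := exp (t • C))).comp_hasDerivAt t (hasDerivAt_exp_smul_const C t)
  have hL : L (exp (t • C) * C) = B *ᵥ (exp (t • C) *ᵥ (C *ᵥ u)) := by
    simp [L, mulVec_mulVec]
  exact hL ▸ this

theorem Matrix.exp_smul_one_add (r : ℝ) (A : Matrix n n ℝ) :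
    exp (r • 1 + A) = Real.exp r • exp A := by
  rw [exp_add_of_commute _ _ ((Commute.one_left A).smul_left r), smul_one_eq_diagonal,
    exp_diagonal, Pi.exp_def, ← Real.exp_eq_exp_ℝ, ← smul_one_eq_diagonal, smul_one_mul]

theorem Matrix.mulVec_exp_smul_mulVec_mulVec_eq_zero_of_const_on {U : Set ℝ} (hU : IsOpen U)
    {B : Matrix m n ℝ} {C : Matrix n n ℝ} {u : n → ℝ} {c : m → ℝ}
    (h : ∀ t ∈ U, B *ᵥ (exp (t • C) *ᵥ u) = c) :
    ∀ t ∈ U, B *ᵥ (exp (t • C) *ᵥ (C *ᵥ u)) = 0 := fun t ht =>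
  (hasDerivAt_mulVec_exp_smul_mulVec B C u t).unique <|
    (hasDerivAt_const t c).congr_of_eventuallyEq (Filter.eventually_of_mem (hU.mem_nhds ht) h)

/-- Lemma 270302-1: if `span{v₂, C v₂} = ℝ²`, `βI + C` is invertible, and
`B₁ e^{-βt} v₁ + B₂ e^{tC} v₂ = 0` for all `t` in a nontrivial interval, then
`B₂ = 0` and `B₁ v₁ = 0`. -/
theorem stmt0 (β : ℝ) (v₁ v₂ : Fin 2 → ℝ) (B₁ B₂ C : Matrix (Fin 2) (Fin 2) ℝ)
    (hspan : Submodule.span ℝ ({v₂, C.mulVec v₂} : Set (Fin 2 → ℝ)) = ⊤)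
    (hinv : IsUnit (β • (1 : Matrix (Fin 2) (Fin 2) ℝ) + C))
    (a b : ℝ) (hab : a < b)
    (heq : ∀ t ∈ Set.Ioo a b,
      B₁.mulVec (Real.exp (-β * t) • v₁)
        + B₂.mulVec ((NormedSpace.exp (t • C)).mulVec v₂) = 0) :
    B₂ = 0 ∧ B₁.mulVec v₁ = 0 := by
  set P := β • (1 : Matrix (Fin 2) (Fin 2) ℝ) + C with hP
  have hconst : ∀ t ∈ Set.Ioo a b, B₂ *ᵥ (exp (t • P) *ᵥ v₂) = -(B₁ *ᵥ v₁) := by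
    intro t ht
    rw [smul_add, smul_smul, exp_smul_one_add, smul_mulVec, mulVec_smul,
      eq_neg_of_add_eq_zero_right (heq t ht), mulVec_smul, smul_neg, smul_smul, ← Real.exp_add,
      show t * β + -β * t = 0 by ring, Real.exp_zero, one_smul]
  have hPv := mulVec_exp_smul_mulVec_mulVec_eq_zero_of_const_on isOpen_Ioo hconst
  have hPPv := mulVec_exp_smul_mulVec_mulVec_eq_zero_of_const_on isOpen_Ioo hPv
  obtain ⟨t₀, ht₀⟩ := Set.nonempty_Ioo.2 hab
  have hspanP : Submodule.span ℝ {v₂, P *ᵥ v₂} = ⊤ := by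
    rwa [hP, add_mulVec, smul_mulVec, one_mulVec, Submodule.span_pair_smul_add]
  have hM : B₂ * exp (t₀ • P) * P = 0 := by
    refine eq_zero_of_mulVec_eq_zero_of_span_eq_top hspanP ?_
    rintro x (rfl | rfl)
    all_goals rw [← mulVec_mulVec, ← mulVec_mulVec]
    exacts [hPv t₀ ht₀, hPPv t₀ ht₀]
  have hB₂ : B₂ = 0 := (isUnit_exp _).mul_left_eq_zero.1 (hinv.mul_left_eq_zero.1 hM)
  have hw := hconst t₀ ht₀
  rw [hB₂, zero_mulVec, eq_comm, neg_eq_zero] at hw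
  exact ⟨hB₂, hw⟩
end

section
/- Let g* : ℝ → ℝ² be continuous, A*, A 2×2 real matrices, b, b* ∈ ℝ with b* > 0, C* = A* − b* I, and suppose bI + C* is invertible. Let G(M)_t = e^{tM} ∫_{t₀}^t e^{−sM} g*(s) ds and let λ*(t) = g*(t) + A* G(C*)_t. Then for a continuous function g(·): ∫_{t₀}^t e^{−b(t−s)} A λ*(s) ds satisfies g(t) + ∫_{t₀}^t e^{−b(t−s)} A λ*(s) ds = g(t) + A (b − b*)(bI + C*)⁻¹ G(−bI)_t + A A* (bI + C*)⁻¹ G(C*)_t for all t ≥ t₀. -/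
/-! Write `F = G(C*)`. Variation of constants gives `F' = C* F + g*` with `F t₀ = 0`, while
`G(-bI)_t = ∫_{t₀}^t e^{-b(t-s)} g*(s) ds`. Differentiating `s ↦ e^{-b(t-s)} F s` and integrating
from `t₀` to `t` yields `(bI + C*) ∫_{t₀}^t e^{-b(t-s)} F(s) ds = F(t) - G(-bI)_t`, and this is
where the invertibility of `bI + C*` enters. After substituting `λ* = g* + A* F`, what remains is
`A - A A* (bI + C*)⁻¹ = (b - b*) A (bI + C*)⁻¹`, i.e. `bI + C* - A* = (b - b*) I`. -/

open Matrix MeasureTheory NormedSpace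

theorem Matrix.intervalIntegral_mulVec {m n : Type*} [Fintype m] [Fintype n] (M : Matrix m n ℝ)
    {f : ℝ → n → ℝ} {a b : ℝ} (hf : IntervalIntegrable f volume a b) :
    ∫ s in a..b, M *ᵥ f s = M *ᵥ ∫ s in a..b, f s :=
  M.mulVecLin.toContinuousLinearMap.intervalIntegral_comp_comm hf

theorem intervalIntegral_smul_mulVec_add_mulVec {m n p : Type*} [Fintype m] [Fintype n]
    [Fintype p] {w : ℝ → ℝ} {f : ℝ → n → ℝ} {h : ℝ → p → ℝ} (hw : Continuous w)
    (hf : Continuous f) (hh : Continuous h) (A : Matrix m n ℝ) (A' : Matrix n p ℝ) (a b : ℝ) :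
    ∫ s in a..b, w s • A *ᵥ (f s + A' *ᵥ h s)
      = A *ᵥ (∫ s in a..b, w s • f s) + (A * A') *ᵥ ∫ s in a..b, w s • h s := by
  have hwf : Continuous fun s => w s • f s := hw.smul hf
  have hwh : Continuous fun s => w s • h s := hw.smul hh
  simp only [mulVec_add, mulVec_mulVec, smul_add, ← mulVec_smul]
  rw [intervalIntegral.integral_add
      ((continuous_const.matrix_mulVec hwf).intervalIntegrable _ _)
      ((continuous_const.matrix_mulVec hwh).intervalIntegrable _ _),
    intervalIntegral_mulVec _ (hwf.intervalIntegrable _ _),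
    intervalIntegral_mulVec _ (hwh.intervalIntegrable _ _)]

variable {ι : Type*} [Fintype ι] [DecidableEq ι]

section LinftyOpNorm

attribute [local instance] Matrix.linftyOpNormedRing Matrix.linftyOpNormedAlgebra

theorem Matrix.continuous_exp_smul (M : Matrix ι ι ℝ) : Continuous fun s : ℝ => exp (s • M) :=
  continuous_iff_continuousAt.2 fun s => (hasDerivAt_exp_smul_const' (𝕂 := ℝ) M s).continuousAt

theorem Matrix.hasDerivAt_exp_smul_mulVec (M : Matrix ι ι ℝ) {v : ℝ → ι → ℝ} {v' : ι → ℝ}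
    {t : ℝ} (hv : HasDerivAt v v' t) :
    HasDerivAt (fun s => exp (s • M) *ᵥ v s)
      (M *ᵥ exp (t • M) *ᵥ v t + exp (t • M) *ᵥ v') t := by
  let B : Matrix ι ι ℝ →L[ℝ] (ι → ℝ) →L[ℝ] (ι → ℝ) :=
    LinearMap.toContinuousLinearMap
      (LinearMap.toContinuousLinearMap.toLinearMap ∘ₗ mulVecBilin ℝ ℝ)
  refine (B.hasDerivAt_of_bilinear (fun _ => hasDerivAt_exp_smul_const' (𝕂 := ℝ) M t)
    (fun _ => hv)).congr_deriv ?_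
  change exp (t • M) *ᵥ v' + (M * exp (t • M)) *ᵥ v t = _
  rw [add_comm, mulVec_mulVec]

theorem Matrix.exp_smul_one (c : ℝ) : exp (c • (1 : Matrix ι ι ℝ)) = Real.exp c • 1 := by
  have h := (algebraMap_exp_comm (𝕂 := ℝ) (𝔸 := Matrix ι ι ℝ) c).symm
  rwa [← Real.exp_eq_exp_ℝ, Algebra.algebraMap_eq_smul_one, Algebra.algebraMap_eq_smul_one] at h

end LinftyOpNorm

/-- `G(M)_t` of the statement: the solution of `x' = M x + f`, `x t₀ = 0`, by variation of
constants. -/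
noncomputable def duhamel (M : Matrix ι ι ℝ) (f : ℝ → ι → ℝ) (t₀ t : ℝ) : ι → ℝ :=
  exp (t • M) *ᵥ ∫ s in t₀..t, exp ((-s) • M) *ᵥ f s

theorem duhamel_self (M : Matrix ι ι ℝ) (f : ℝ → ι → ℝ) (t₀ : ℝ) : duhamel M f t₀ t₀ = 0 := by
  simp [duhamel]

theorem hasDerivAt_duhamel (M : Matrix ι ι ℝ) {f : ℝ → ι → ℝ} (hf : Continuous f) (t₀ t : ℝ) :
    HasDerivAt (duhamel M f t₀) (M *ᵥ duhamel M f t₀ t + f t) t := by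
  have hint : Continuous fun s : ℝ => exp ((-s) • M) *ᵥ f s :=
    ((continuous_exp_smul M).comp continuous_neg).matrix_mulVec hf
  refine (hasDerivAt_exp_smul_mulVec M
    (hint.integral_hasStrictDerivAt t₀ t).hasDerivAt).congr_deriv ?_
  rw [mulVec_mulVec (f t), ← exp_add_of_commute _ _ ((Commute.refl M).smul_left _ |>.smul_right _),
    ← add_smul, add_neg_cancel, zero_smul, exp_zero, one_mulVec]
  rfl

theorem continuous_duhamel (M : Matrix ι ι ℝ) {f : ℝ → ι → ℝ} (hf : Continuous f) (t₀ : ℝ) :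
    Continuous (duhamel M f t₀) :=
  continuous_iff_continuousAt.2 fun t => (hasDerivAt_duhamel M hf t₀ t).continuousAt

theorem duhamel_smul_one (c : ℝ) (f : ℝ → ι → ℝ) (t₀ t : ℝ) :
    duhamel (c • 1) f t₀ t = ∫ s in t₀..t, Real.exp (c * (t - s)) • f s := by
  simp only [duhamel, smul_smul, exp_smul_one, smul_mulVec, one_mulVec,
    ← intervalIntegral.integral_smul]
  congr 1 with s : 1
  rw [← Real.exp_add]
  ring_nf

theorem mulVec_integral_exp_smul_of_hasDerivAt {M : Matrix ι ι ℝ} {F f : ℝ → ι → ℝ}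
    (hF : ∀ s, HasDerivAt F (M *ᵥ F s + f s) s) (hf : Continuous f) (b t₀ t : ℝ) :
    (b • 1 + M) *ᵥ ∫ s in t₀..t, Real.exp (-b * (t - s)) • F s
      = F t - Real.exp (-b * (t - t₀)) • F t₀ - ∫ s in t₀..t, Real.exp (-b * (t - s)) • f s := by
  have hFc : Continuous F := continuous_iff_continuousAt.2 fun s => (hF s).continuousAt
  have hweight : ∀ s, HasDerivAt (fun u => Real.exp (-b * (t - u)))
      (Real.exp (-b * (t - s)) * b) s :=
    fun s => by simpa using ((hasDerivAt_id s).const_sub t |>.const_mul (-b)).exp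
  have hderiv : ∀ s, HasDerivAt (fun u => Real.exp (-b * (t - u)) • F u)
      ((b • 1 + M) *ᵥ (Real.exp (-b * (t - s)) • F s) + Real.exp (-b * (t - s)) • f s) s := by
    intro s
    refine ((hweight s).smul (hF s)).congr_deriv ?_
    rw [add_mulVec, smul_mulVec, one_mulVec, mulVec_smul]
    module
  have hw : Continuous fun s => Real.exp (-b * (t - s)) := by fun_prop
  have hKc : Continuous fun s => Real.exp (-b * (t - s)) • F s := hw.smul hFc
  have hkc : Continuous fun s => Real.exp (-b * (t - s)) • f s := hw.smul hf
  have hFTC := intervalIntegral.integral_eq_sub_of_hasDerivAt (fun s _ => hderiv s)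
    ((continuous_const.matrix_mulVec hKc).add hkc |>.intervalIntegrable t₀ t)
  rw [intervalIntegral.integral_add ((continuous_const.matrix_mulVec hKc).intervalIntegrable _ _)
    (hkc.intervalIntegrable _ _), intervalIntegral_mulVec _ (hKc.intervalIntegrable _ _)] at hFTC
  simp only [sub_self, mul_zero, Real.exp_zero, one_smul] at hFTC
  exact eq_sub_of_add_eq hFTC

theorem stmt4_general (gs : ℝ → Fin 2 → ℝ) (hgs : Continuous gs)
    (A As : Matrix (Fin 2) (Fin 2) ℝ) (b bs : ℝ)
    (Cs : Matrix (Fin 2) (Fin 2) ℝ)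
    (hCs : Cs = As - bs • (1 : Matrix (Fin 2) (Fin 2) ℝ))
    (hinv : IsUnit (b • (1 : Matrix (Fin 2) (Fin 2) ℝ) + Cs))
    (t₀ : ℝ)
    (G : Matrix (Fin 2) (Fin 2) ℝ → ℝ → Fin 2 → ℝ)
    (hG : ∀ M t, G M t =
      (NormedSpace.exp (t • M)).mulVec
        (∫ s in t₀..t, (NormedSpace.exp ((-s) • M)).mulVec (gs s)))
    (lams : ℝ → Fin 2 → ℝ)
    (hlams : ∀ t, lams t = gs t + As.mulVec (G Cs t))
    (g : ℝ → Fin 2 → ℝ) :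
    ∀ t ≥ t₀,
      g t + ∫ s in t₀..t, Real.exp (-b * (t - s)) • A.mulVec (lams s)
        = g t
          + ((b - bs) • (A * (b • (1 : Matrix (Fin 2) (Fin 2) ℝ) + Cs)⁻¹)).mulVec
              (G ((-b) • (1 : Matrix (Fin 2) (Fin 2) ℝ)) t)
          + (A * As * (b • (1 : Matrix (Fin 2) (Fin 2) ℝ) + Cs)⁻¹).mulVec (G Cs t) := by
  intro t _
  have hG' : ∀ M, G M = duhamel M gs t₀ := fun M => funext (hG M)
  set B := b • (1 : Matrix (Fin 2) (Fin 2) ℝ) + Cs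
  have hB : IsUnit B.det := (isUnit_iff_isUnit_det B).1 hinv
  set F := duhamel Cs gs t₀
  set E := ∫ s in t₀..t, Real.exp (-b * (t - s)) • gs s
  set K := ∫ s in t₀..t, Real.exp (-b * (t - s)) • F s
  have hK : K = B⁻¹ *ᵥ (F t - E) := by
    have h := mulVec_integral_exp_smul_of_hasDerivAt (hasDerivAt_duhamel Cs hgs t₀) hgs b t₀ t
    rw [duhamel_self, smul_zero, sub_zero] at h
    rw [← h, mulVec_mulVec, nonsing_inv_mul _ hB, one_mulVec]
  have hLHS : ∫ s in t₀..t, Real.exp (-b * (t - s)) • A *ᵥ lams s = A *ᵥ E + (A * As) *ᵥ K := by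
    simp only [hlams, hG']
    exact intervalIntegral_smul_mulVec_add_mulVec (by fun_prop) hgs (continuous_duhamel Cs hgs t₀)
      A As t₀ t
  have hcoeff : (b - bs) • (A * B⁻¹) = A - A * As * B⁻¹ := by
    have hBAs : B - As = (b - bs) • 1 := by simp only [B, hCs]; module
    rw [← smul_mul_assoc, ← mul_smul_one, ← hBAs, mul_sub, sub_mul, mul_assoc A B,
      mul_nonsing_inv _ hB, mul_one]
  rw [hLHS, hK, hcoeff, hG', hG', duhamel_smul_one, mulVec_mulVec, sub_mulVec, mulVec_sub]
  abel

/-- Lemma 270228-1: with `G(M)_t = e^{tM} ∫_{t₀}^t e^{-sM} g*(s) ds` and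
`λ*(t) = g*(t) + A* G(C*)_t`, for invertible `bI + C*` one has
`g(t) + ∫_{t₀}^t e^{-b(t-s)} A λ*(s) ds
  = g(t) + A(b - b*)(bI + C*)⁻¹ G(-bI)_t + A A* (bI + C*)⁻¹ G(C*)_t` for `t ≥ t₀`. -/
theorem stmt4 (gs : ℝ → Fin 2 → ℝ) (hgs : Continuous gs)
    (A As : Matrix (Fin 2) (Fin 2) ℝ) (b bs : ℝ) (hbs : 0 < bs)
    (Cs : Matrix (Fin 2) (Fin 2) ℝ)
    (hCs : Cs = As - bs • (1 : Matrix (Fin 2) (Fin 2) ℝ))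
    (hinv : IsUnit (b • (1 : Matrix (Fin 2) (Fin 2) ℝ) + Cs))
    (t₀ : ℝ)
    (G : Matrix (Fin 2) (Fin 2) ℝ → ℝ → Fin 2 → ℝ)
    (hG : ∀ M t, G M t =
      (NormedSpace.exp (t • M)).mulVec
        (∫ s in t₀..t, (NormedSpace.exp ((-s) • M)).mulVec (gs s)))
    (lams : ℝ → Fin 2 → ℝ)
    (hlams : ∀ t, lams t = gs t + As.mulVec (G Cs t))
    (g : ℝ → Fin 2 → ℝ) (hg : Continuous g) :
    ∀ t ≥ t₀,
      g t + ∫ s in t₀..t, Real.exp (-b * (t - s)) • A.mulVec (lams s)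
        = g t
          + ((b - bs) • (A * (b • (1 : Matrix (Fin 2) (Fin 2) ℝ) + Cs)⁻¹)).mulVec
              (G ((-b) • (1 : Matrix (Fin 2) (Fin 2) ℝ)) t)
          + (A * As * (b • (1 : Matrix (Fin 2) (Fin 2) ℝ) + Cs)⁻¹).mulVec (G Cs t) :=
  stmt4_general gs hgs A As b bs Cs hCs hinv t₀ G hG lams hlams g
end
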